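/- arXiv:2206.04749 — 3 statements merged into one kernel-verified Lean document; each statement's English description precedes it below -/
import Mathlib

section
/- Let H be a finite connected simple graph, V a set of vertices of H, and c ∈ V a vertex of degree 2 in H. Let (P₁,P₂) be a pair of disjoint sets with P₁ ∪ P₂ = V such that each of P₁ and P₂ contains at least one vertex of V ∖ {c}, and let (ψ, φ) be an admissible pair of H for (P₁,P₂). Then of the two edges of H incident to c, exactly one lies in ψ and exactly one lies in φ; and the pair (ψ′, φ′) obtained from (ψ, φ) by exchanging these two edges between the two parts is again an admissible pair of H for some pair of disjoint sets covering V, namely either for (P₁,P₂) itself or for the pair obtained from (P₁,P₂) by moving c to the other part. -/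
namespace C2

open SimpleGraph

variable {V : Type*}

/-- `ψ` is the edge set of a spanning tree of `H`. -/
def IsSpanningTree (H : SimpleGraph V) (ψ : Set (Sym2 V)) : Prop :=
  ψ ⊆ H.edgeSet ∧ (fromEdgeSet ψ).Connected ∧ (fromEdgeSet ψ).IsAcyclic

/-- `φ` is a spanning 2-forest of `H` compatible with `(P₁, P₂)`. -/
def IsSpanning2Forest (H : SimpleGraph V) (P₁ P₂ : Set V) (φ : Set (Sym2 V)) : Prop :=
  φ ⊆ H.edgeSet ∧ (fromEdgeSet φ).IsAcyclic ∧
    ∃ C₁ C₂ : (fromEdgeSet φ).ConnectedComponent, C₁ ≠ C₂ ∧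
      (∀ C : (fromEdgeSet φ).ConnectedComponent, C = C₁ ∨ C = C₂) ∧
      (∀ u ∈ P₁, (fromEdgeSet φ).connectedComponentMk u = C₁) ∧
      (∀ u ∈ P₂, (fromEdgeSet φ).connectedComponentMk u = C₂)

/-- `(ψ, φ)` is an admissible pair of `H` for `(P₁, P₂)`. -/
def AdmissiblePair (H : SimpleGraph V) (P₁ P₂ : Set V) (ψ φ : Set (Sym2 V)) : Prop :=
  Disjoint ψ φ ∧ ψ ∪ φ = H.edgeSet ∧ IsSpanningTree H ψ ∧ IsSpanning2Forest H P₁ P₂ φ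

/-!
Both the tree `ψ` and the forest `φ` must reach `c` (each part of `(P₁, P₂)` has a vertex other
than `c`), and they share no edge, so each contains exactly one of the two edges at `c`: the
vertex `c` is a leaf of both. Removing a leaf changes neither acyclicity nor connectivity among
the other vertices, so re-attaching `c` through its other edge gives again a spanning tree, and a
forest with the same two components away from `c`, where `c` now lies in the component of its new
neighbour. Only the side of `c` can change, i.e. the parts change at most by `∆ {c}`.
-/

section PendantEdge

variable {G : SimpleGraph V} {c a b : V}

lemma exists_adj_of_reachable_of_ne {u v : V} (h : G.Reachable u v) (huv : u ≠ v) :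
    ∃ w, G.Adj u w :=
  let ⟨p⟩ := h
  let ⟨w, huw, _⟩ := Walk.exists_eq_cons_of_ne huv p
  ⟨w, huw⟩

/- Collapsing `c` onto `a` turns walks of `G ⊔ edge c a` into walks of `G`. -/
lemma reachable_sup_edge_iff_of_ne (hc : ∀ d, ¬G.Adj c d) {u v : V} (hu : u ≠ c)
    (hv : v ≠ c) : (G ⊔ edge c a).Reachable u v ↔ G.Reachable u v := by
  classical
  refine ⟨fun h => ?_, Reachable.mono le_sup_left⟩
  let f : V → V := fun x => if x = c then a else x
  have hf : ∀ x y, (G ⊔ edge c a).Adj x y → G.Reachable (f x) (f y) := by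
    rintro x y (hxy | hxy)
    · have hx : x ≠ c := by rintro rfl; exact hc y hxy
      have hy : y ≠ c := by rintro rfl; exact hc x hxy.symm
      simp [f, hx, hy, hxy.reachable]
    · rw [edge_adj] at hxy
      rcases hxy with ⟨⟨rfl, rfl⟩ | ⟨rfl, rfl⟩, -⟩ <;> simp [f]
  rw [reachable_iff_reflTransGen] at h
  simpa [f, hu, hv, ← reachable_iff_reflTransGen] using
    Relation.ReflTransGen.lift' f
      (fun x y hxy => (reachable_iff_reflTransGen _ _).1 (hf x y hxy)) u v h

lemma isAcyclic_sup_edge_iff (hc : ∀ d, ¬G.Adj c d) (ha : a ≠ c) :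
    (G ⊔ edge c a).IsAcyclic ↔ G.IsAcyclic :=
  isAcyclic_add_edge_iff_of_not_reachable c a fun h =>
    let ⟨d, hcd⟩ := exists_adj_of_reachable_of_ne h ha.symm
    hc d hcd

lemma connected_sup_edge_of_connected_sup_edge (hc : ∀ d, ¬G.Adj c d) (ha : a ≠ c)
    (hb : b ≠ c) (h : (G ⊔ edge c a).Connected) : (G ⊔ edge c b).Connected := by
  refine (connected_iff_exists_forall_reachable _).2 ⟨b, fun w => ?_⟩
  by_cases hw : w = c
  · subst hw
    exact (Adj.reachable (Or.inr ((edge_adj ..).2 ⟨Or.inl ⟨rfl, rfl⟩, hb.symm⟩))).symm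
  · exact ((reachable_sup_edge_iff_of_ne hc hb hw).2
      ((reachable_sup_edge_iff_of_ne hc hb hw).1 (h.preconnected b w)))

end PendantEdge

def TwoComponentsSeparate (G : SimpleGraph V) (P₁ P₂ : Set V) : Prop :=
  ∃ C₁ C₂ : G.ConnectedComponent, C₁ ≠ C₂ ∧ (∀ C, C = C₁ ∨ C = C₂) ∧
    (∀ u ∈ P₁, G.connectedComponentMk u = C₁) ∧ (∀ u ∈ P₂, G.connectedComponentMk u = C₂)

namespace TwoComponentsSeparate

variable {G G' : SimpleGraph V} {P₁ P₂ : Set V}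

lemma iff_reachable {u₁ u₂ : V} (hu₁ : u₁ ∈ P₁) (hu₂ : u₂ ∈ P₂) :
    TwoComponentsSeparate G P₁ P₂ ↔ ¬G.Reachable u₁ u₂ ∧
      (∀ x, G.Reachable x u₁ ∨ G.Reachable x u₂) ∧
      (∀ p ∈ P₁, G.Reachable p u₁) ∧ (∀ p ∈ P₂, G.Reachable p u₂) := by
  simp only [← ConnectedComponent.eq]
  constructor
  · rintro ⟨C₁, C₂, hne, hall, hP₁, hP₂⟩
    refine ⟨by rwa [hP₁ u₁ hu₁, hP₂ u₂ hu₂], fun x => ?_, fun p hp => ?_, fun p hp => ?_⟩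
    · rw [hP₁ u₁ hu₁, hP₂ u₂ hu₂]; exact hall _
    · rw [hP₁ p hp, hP₁ u₁ hu₁]
    · rw [hP₂ p hp, hP₂ u₂ hu₂]
  · rintro ⟨hne, hall, hP₁, hP₂⟩
    exact ⟨_, _, hne, ConnectedComponent.ind hall, hP₁, hP₂⟩

lemma symm (h : TwoComponentsSeparate G P₁ P₂) : TwoComponentsSeparate G P₂ P₁ :=
  let ⟨C₁, C₂, hne, hall, hP₁, hP₂⟩ := h
  ⟨C₂, C₁, hne.symm, fun C => (hall C).symm, hP₂, hP₁⟩

lemma mono {Q₁ Q₂ : Set V} (h : TwoComponentsSeparate G P₁ P₂) (h₁ : Q₁ ⊆ P₁) (h₂ : Q₂ ⊆ P₂) :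
    TwoComponentsSeparate G Q₁ Q₂ :=
  let ⟨C₁, C₂, hne, hall, hP₁, hP₂⟩ := h
  ⟨C₁, C₂, hne, hall, fun u hu => hP₁ u (h₁ hu), fun u hu => hP₂ u (h₂ hu)⟩

lemma or_symmDiff {c : V} (h : TwoComponentsSeparate G (P₁ ∪ {c}) (P₂ \ {c})) :
    TwoComponentsSeparate G P₁ P₂ ∨
      TwoComponentsSeparate G (symmDiff P₁ {c}) (symmDiff P₂ {c}) := by
  by_cases hc : c ∈ P₂
  · refine Or.inr (h.mono Set.symmDiff_subset_union fun p hp => ?_)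
    rcases Set.mem_symmDiff.1 hp with hp | ⟨rfl, hcP₂⟩
    exacts [hp, absurd hc hcP₂]
  · exact Or.inl (h.mono Set.subset_union_left fun p hp => ⟨hp, by rintro rfl; exact hc hp⟩)

lemma union_singleton_sdiff_of_reachable_iff {c u₁ u₂ : V} (h : TwoComponentsSeparate G P₁ P₂)
    (hu₁ : u₁ ∈ P₁ \ {c}) (hu₂ : u₂ ∈ P₂ \ {c})
    (hreach : ∀ u v, u ≠ c → v ≠ c → (G.Reachable u v ↔ G'.Reachable u v))
    (hc : G'.Reachable c u₁) : TwoComponentsSeparate G' (P₁ ∪ {c}) (P₂ \ {c}) := by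
  obtain ⟨hu₁P, hu₁c : u₁ ≠ c⟩ := hu₁
  obtain ⟨hu₂P, hu₂c : u₂ ≠ c⟩ := hu₂
  obtain ⟨hne, hall, hP₁, hP₂⟩ := (iff_reachable hu₁P hu₂P).1 h
  have transfer : ∀ {x u}, x ≠ c → u ≠ c → G.Reachable x u → G'.Reachable x u :=
    fun hx hu => (hreach _ _ hx hu).1
  refine (iff_reachable (G := G') (Or.inl hu₁P : u₁ ∈ P₁ ∪ {c})
    (⟨hu₂P, hu₂c⟩ : u₂ ∈ P₂ \ {c})).2
    ⟨fun h' => hne ((hreach _ _ hu₁c hu₂c).2 h'), fun x => ?_, fun p hp => ?_, fun p hp => ?_⟩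
  · by_cases hx : x = c
    · exact Or.inl (hx ▸ hc)
    · exact (hall x).imp (transfer hx hu₁c) (transfer hx hu₂c)
  · rcases hp with hp | rfl
    · by_cases hpc : p = c
      · exact hpc ▸ hc
      · exact transfer hpc hu₁c (hP₁ p hp)
    · exact hc
  · exact transfer hp.2 hu₂c (hP₂ p hp.1)

lemma of_reachable_iff {c u₁ u₂ w : V} (h : TwoComponentsSeparate G P₁ P₂)
    (hu₁ : u₁ ∈ P₁ \ {c}) (hu₂ : u₂ ∈ P₂ \ {c})
    (hreach : ∀ u v, u ≠ c → v ≠ c → (G.Reachable u v ↔ G'.Reachable u v))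
    (hw : w ≠ c) (hcw : G'.Adj c w) :
    TwoComponentsSeparate G' P₁ P₂ ∨
      TwoComponentsSeparate G' (symmDiff P₁ {c}) (symmDiff P₂ {c}) := by
  have hw' : ∀ {u}, u ≠ c → G.Reachable w u → G'.Reachable c u :=
    fun hu hwu => hcw.reachable.trans ((hreach _ _ hw hu).1 hwu)
  obtain ⟨-, hall, -⟩ := (iff_reachable hu₁.1 hu₂.1).1 h
  rcases hall w with hwu | hwu
  · exact (h.union_singleton_sdiff_of_reachable_iff hu₁ hu₂ hreach (hw' hu₁.2 hwu)).or_symmDiff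
  · exact (h.symm.union_singleton_sdiff_of_reachable_iff hu₂ hu₁ hreach
      (hw' hu₂.2 hwu)).or_symmDiff.imp symm symm

end TwoComponentsSeparate

section TwoValent

variable {H : SimpleGraph V} {c a b : V}

lemma incidenceSet_eq_pair (hnbr : H.neighborSet c = {a, b}) :
    H.incidenceSet c = {s(c, a), s(c, b)} := by
  have hadj (d : V) : H.Adj c d ↔ d = a ∨ d = b := Set.ext_iff.1 hnbr d
  ext e
  induction e using Sym2.ind with
  | _ x y =>
    simp only [mk'_mem_incidenceSet_iff, Set.mem_insert_iff, Set.mem_singleton_iff, Sym2.eq_iff]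
    constructor
    · rintro ⟨hxy, rfl | rfl⟩
      · grind
      · have := (hadj x).1 hxy.symm
        grind
    · rintro ((⟨rfl, rfl⟩ | ⟨rfl, rfl⟩) | (⟨rfl, rfl⟩ | ⟨rfl, rfl⟩)) <;> grind [H.adj_comm]

lemma mem_or_mem_of_adj_fromEdgeSet {S : Set (Sym2 V)} {d : V} (hS : S ⊆ H.edgeSet)
    (hnbr : H.neighborSet c = {a, b}) (h : (fromEdgeSet S).Adj c d) :
    s(c, a) ∈ S ∨ s(c, b) ∈ S := by
  obtain ⟨hcd, -⟩ := (fromEdgeSet_adj S).1 h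
  rcases (Set.ext_iff.1 hnbr d).1 (hS hcd) with rfl | rfl
  exacts [Or.inl hcd, Or.inr hcd]

lemma mem_or_mem_of_reachable_fromEdgeSet {S : Set (Sym2 V)} {u : V} (hS : S ⊆ H.edgeSet)
    (hnbr : H.neighborSet c = {a, b}) (h : (fromEdgeSet S).Reachable c u) (hu : u ≠ c) :
    s(c, a) ∈ S ∨ s(c, b) ∈ S :=
  let ⟨_, hcd⟩ := exists_adj_of_reachable_of_ne h hu.symm
  mem_or_mem_of_adj_fromEdgeSet hS hnbr hcd

lemma forall_not_adj_fromEdgeSet_diff {S : Set (Sym2 V)} (hS : S ⊆ H.edgeSet)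
    (hnbr : H.neighborSet c = {a, b}) (hb : s(c, b) ∉ S) (d : V) :
    ¬(fromEdgeSet (S \ {s(c, a)})).Adj c d := fun h =>
  (mem_or_mem_of_adj_fromEdgeSet (Set.sdiff_subset.trans hS) hnbr h).elim
    (fun ha => ha.2 rfl) (fun hb' => hb hb'.1)

end TwoValent

lemma fromEdgeSet_union_singleton (S : Set (Sym2 V)) (c a : V) :
    fromEdgeSet (S ∪ {s(c, a)}) = fromEdgeSet S ⊔ edge c a :=
  fromEdgeSet_union _ _

lemma fromEdgeSet_eq_sup_edge {S : Set (Sym2 V)} {c a : V} (h : s(c, a) ∈ S) :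
    fromEdgeSet S = fromEdgeSet (S \ {s(c, a)}) ⊔ edge c a := by
  rw [← fromEdgeSet_union_singleton, Set.sdiff_union_of_subset (Set.singleton_subset_iff.2 h)]

lemma swap_disjoint_and_union_eq {α : Type*} {ψ φ : Set α} {e₁ e₂ : α} (hdisj : Disjoint ψ φ)
    (he₁ : e₁ ∈ ψ) (he₂ : e₂ ∈ φ) :
    Disjoint (ψ \ {e₁} ∪ {e₂}) (φ \ {e₂} ∪ {e₁}) ∧
      ψ \ {e₁} ∪ {e₂} ∪ (φ \ {e₂} ∪ {e₁}) = ψ ∪ φ := by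
  have := Set.disjoint_left.1 hdisj
  constructor
  · rw [Set.disjoint_left]; grind
  · ext; grind

lemma isSpanning2Forest_iff {H : SimpleGraph V} {P₁ P₂ : Set V} {φ : Set (Sym2 V)} :
    IsSpanning2Forest H P₁ P₂ φ ↔
      φ ⊆ H.edgeSet ∧ (fromEdgeSet φ).IsAcyclic ∧ TwoComponentsSeparate (fromEdgeSet φ) P₁ P₂ :=
  Iff.rfl

section Admissible

variable {H : SimpleGraph V} {P₁ P₂ : Set V} {ψ φ : Set (Sym2 V)} {c a b : V}

lemma AdmissiblePair.mem_or_mem_tree (hadm : AdmissiblePair H P₁ P₂ ψ φ)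
    (hnbr : H.neighborSet c = {a, b}) (h1 : (P₁ \ {c}).Nonempty) :
    s(c, a) ∈ ψ ∨ s(c, b) ∈ ψ :=
  let ⟨_, _, ⟨hψE, hψconn, _⟩, _⟩ := hadm
  let ⟨u₁, _, hu₁c⟩ := h1
  mem_or_mem_of_reachable_fromEdgeSet hψE hnbr (hψconn.preconnected c u₁) hu₁c

lemma AdmissiblePair.mem_or_mem_forest (hadm : AdmissiblePair H P₁ P₂ ψ φ)
    (hnbr : H.neighborSet c = {a, b}) (h1 : (P₁ \ {c}).Nonempty) (h2 : (P₂ \ {c}).Nonempty) :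
    s(c, a) ∈ φ ∨ s(c, b) ∈ φ := by
  obtain ⟨-, -, -, hφE, -, hφsep⟩ := hadm
  obtain ⟨u₁, hu₁P, hu₁c⟩ := h1
  obtain ⟨u₂, hu₂P, hu₂c⟩ := h2
  rcases ((TwoComponentsSeparate.iff_reachable hu₁P hu₂P).1 hφsep).2.1 c with hc | hc
  exacts [mem_or_mem_of_reachable_fromEdgeSet hφE hnbr hc hu₁c,
    mem_or_mem_of_reachable_fromEdgeSet hφE hnbr hc hu₂c]

lemma AdmissiblePair.swap (hadm : AdmissiblePair H P₁ P₂ ψ φ) (hnbr : H.neighborSet c = {a, b})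
    (h1 : (P₁ \ {c}).Nonempty) (h2 : (P₂ \ {c}).Nonempty)
    (ha : s(c, a) ∈ ψ) (hb : s(c, b) ∈ φ) :
    AdmissiblePair H P₁ P₂ (ψ \ {s(c, a)} ∪ {s(c, b)}) (φ \ {s(c, b)} ∪ {s(c, a)}) ∨
      AdmissiblePair H (symmDiff P₁ {c}) (symmDiff P₂ {c})
        (ψ \ {s(c, a)} ∪ {s(c, b)}) (φ \ {s(c, b)} ∪ {s(c, a)}) := by
  obtain ⟨hdisj, hunion, ⟨hψE, hψconn, hψacy⟩, hφ⟩ := hadm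
  obtain ⟨hφE, hφacy, hφsep⟩ := isSpanning2Forest_iff.1 hφ
  obtain ⟨u₁, hu₁⟩ := h1
  obtain ⟨u₂, hu₂⟩ := h2
  have hac : a ≠ c := (H.ne_of_adj (hψE ha)).symm
  have hbc : b ≠ c := (H.ne_of_adj (hφE hb)).symm
  have hψ₀ := forall_not_adj_fromEdgeSet_diff hψE hnbr (Set.disjoint_right.1 hdisj hb)
  have hφ₀ := forall_not_adj_fromEdgeSet_diff hφE (hnbr.trans (Set.pair_comm a b))
    (Set.disjoint_left.1 hdisj ha)
  rw [fromEdgeSet_eq_sup_edge ha] at hψconn hψacy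
  rw [fromEdgeSet_eq_sup_edge hb] at hφacy hφsep
  obtain ⟨hdisj', hunion'⟩ := swap_disjoint_and_union_eq hdisj ha hb
  rw [hunion] at hunion'
  have htree : IsSpanningTree H (ψ \ {s(c, a)} ∪ {s(c, b)}) := by
    refine ⟨hunion' ▸ Set.subset_union_left, ?_, ?_⟩ <;> rw [fromEdgeSet_union_singleton]
    · exact connected_sup_edge_of_connected_sup_edge hψ₀ hac hbc hψconn
    · exact (isAcyclic_sup_edge_iff hψ₀ hbc).2 ((isAcyclic_sup_edge_iff hψ₀ hac).1 hψacy)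
  have hreach (u v : V) (hu : u ≠ c) (hv : v ≠ c) :
      (fromEdgeSet (φ \ {s(c, b)}) ⊔ edge c b).Reachable u v ↔
        (fromEdgeSet (φ \ {s(c, b)}) ⊔ edge c a).Reachable u v := by
    rw [reachable_sup_edge_iff_of_ne hφ₀ hu hv, reachable_sup_edge_iff_of_ne hφ₀ hu hv]
  have hca : (fromEdgeSet (φ \ {s(c, b)}) ⊔ edge c a).Adj c a :=
    Or.inr ((edge_adj ..).2 ⟨Or.inl ⟨rfl, rfl⟩, hac.symm⟩)
  have hforest {Q₁ Q₂ : Set V}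
      (hsep : TwoComponentsSeparate (fromEdgeSet (φ \ {s(c, b)}) ⊔ edge c a) Q₁ Q₂) :
      AdmissiblePair H Q₁ Q₂ (ψ \ {s(c, a)} ∪ {s(c, b)}) (φ \ {s(c, b)} ∪ {s(c, a)}) := by
    refine ⟨hdisj', hunion', htree,
      isSpanning2Forest_iff.2 ⟨hunion' ▸ Set.subset_union_right, ?_, ?_⟩⟩ <;>
      rw [fromEdgeSet_union_singleton]
    · exact (isAcyclic_sup_edge_iff hφ₀ hac).2 ((isAcyclic_sup_edge_iff hφ₀ hbc).1 hφacy)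
    · exact hsep
  exact (hφsep.of_reachable_iff hu₁ hu₂ hreach hac hca).imp hforest hforest

end Admissible

theorem swap_around_two_valent_general {V : Type*}
    (H : SimpleGraph V) (c : V) (hdeg : (H.neighborSet c).ncard = 2)
    (P₁ P₂ : Set V)
    (h1 : (P₁ \ {c}).Nonempty) (h2 : (P₂ \ {c}).Nonempty)
    (ψ φ : Set (Sym2 V)) (hadm : AdmissiblePair H P₁ P₂ ψ φ) :
    ∃ e₁ e₂ : Sym2 V, e₁ ≠ e₂ ∧ H.incidenceSet c = {e₁, e₂} ∧ e₁ ∈ ψ ∧ e₂ ∈ φ ∧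
      (AdmissiblePair H P₁ P₂ ((ψ \ {e₁}) ∪ {e₂}) ((φ \ {e₂}) ∪ {e₁}) ∨
        AdmissiblePair H (symmDiff P₁ {c}) (symmDiff P₂ {c})
          ((ψ \ {e₁}) ∪ {e₂}) ((φ \ {e₂}) ∪ {e₁})) := by
  obtain ⟨a, b, -, hnbr⟩ := Set.ncard_eq_two.mp hdeg
  wlog ha : s(c, a) ∈ ψ generalizing a b
  · exact this b a (hnbr.trans (Set.pair_comm a b))
      ((hadm.mem_or_mem_tree hnbr h1).resolve_left ha)
  have hb := (hadm.mem_or_mem_forest hnbr h1 h2).resolve_left (Set.disjoint_left.1 hadm.1 ha)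
  exact ⟨_, _, hadm.1.ne_of_mem ha hb, incidenceSet_eq_pair hnbr, ha, hb,
    hadm.swap hnbr h1 h2 ha hb⟩

/-- swapping around a 2-valent vertex: let `H` be a finite connected
simple graph, `Vset` a set of vertices, `c ∈ Vset` a vertex of degree 2, `(P₁, P₂)` a
partition of `Vset` with each part containing a vertex other than `c`, and `(ψ, φ)` an
admissible pair of `H` for `(P₁, P₂)`.  Then exactly one of the two edges incident to
`c` lies in `ψ` and exactly one lies in `φ`, and swapping them gives an admissible pair
either for `(P₁, P₂)` itself or for the pair obtained by moving `c` to the other part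
(symmetric difference with `{c}`). -/
theorem swap_around_two_valent {V : Type*} [Fintype V]
    (H : SimpleGraph V) (hconn : H.Connected)
    (Vset : Set V) (c : V) (hc : c ∈ Vset) (hdeg : (H.neighborSet c).ncard = 2)
    (P₁ P₂ : Set V) (hdisj : Disjoint P₁ P₂) (hunion : P₁ ∪ P₂ = Vset)
    (h1 : (P₁ \ {c}).Nonempty) (h2 : (P₂ \ {c}).Nonempty)
    (ψ φ : Set (Sym2 V)) (hadm : AdmissiblePair H P₁ P₂ ψ φ) :
    ∃ e₁ e₂ : Sym2 V, e₁ ≠ e₂ ∧ H.incidenceSet c = {e₁, e₂} ∧ e₁ ∈ ψ ∧ e₂ ∈ φ ∧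
      (AdmissiblePair H P₁ P₂ ((ψ \ {e₁}) ∪ {e₂}) ((φ \ {e₂}) ∪ {e₁}) ∨
        AdmissiblePair H (symmDiff P₁ {c}) (symmDiff P₂ {c})
          ((ψ \ {e₁}) ∪ {e₂}) ((φ \ {e₂}) ∪ {e₁})) :=
  swap_around_two_valent_general H c hdeg P₁ P₂ h1 h2 ψ φ hadm

end C2
end

section
/- In the T-case setup, the sum t_{({a},{b,c,d})} + t_{({a,b},{c,d})} is even and the sum t_{({d},{a,b,c})} + t_{({a,b},{c,d})} is even; consequently t_{({a},{b,c,d})} + t_{({d},{a,b,c})} ≡ 0 (mod 2). -/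
namespace C2

open SimpleGraph

variable {V : Type*}

/-- The number of admissible pairs of `H` for `(P₁, P₂)`. -/
noncomputable def admissibleCount (H : SimpleGraph V) (P₁ P₂ : Set V) : ℕ :=
  Set.ncard {pr : Set (Sym2 V) × Set (Sym2 V) | AdmissiblePair H P₁ P₂ pr.1 pr.2}

/-- The Kirchhoff polynomial `Ψ_G = Σ_T Π_{e ∉ T} x_e`. -/
noncomputable def kirchhoff (G : SimpleGraph V) : MvPolynomial G.edgeSet ℤ :=
  ∑ᶠ T ∈ {T : Set (Sym2 V) | IsSpanningTree G T},
    ∏ᶠ e ∈ {e : G.edgeSet | (e : Sym2 V) ∉ T}, MvPolynomial.X e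

/-- `[Ψ_G]₂`, the number of points `x ∈ 𝔽₂^{E(G)}` with `Ψ_G(x) = 0`. -/
noncomputable def pointCount2 (G : SimpleGraph V) : ℕ :=
  Set.ncard {x : G.edgeSet → ZMod 2 |
    MvPolynomial.eval₂ (Int.castRingHom (ZMod 2)) x (kirchhoff G) = 0}

theorem mem_compl_pair {x v w : V} (h1 : x ≠ v) (h2 : x ≠ w) :
    x ∈ ({v, w}ᶜ : Set V) := by
  simp [h1, h2]

/-!
Let `u` be a vertex of degree two, with edges `e₁` and `e₂`, and let `P₁`, `P₂` be nonempty sets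
avoiding `u`. In an admissible pair `(ψ, φ)` for `(P₁ ∪ {u}, P₂)` or for `(P₁, P₂ ∪ {u})`, the
vertex `u` is a leaf of both the tree `ψ` and the 2-forest `φ`, so one of `e₁, e₂` lies in `ψ`
and the other in `φ`. Exchanging them keeps `ψ` a spanning tree and keeps `φ` a 2-forest
separating `P₁` from `P₂`, with `u` moved to the side of its other neighbour. This is a
fixed-point-free involution on the two families of pairs together, so
`t_{(P₁ ∪ {u}, P₂)} + t_{(P₁, P₂ ∪ {u})}` is even. In the T-case `b` and `c` have degree two in
`T`; `u = b` and `u = c` give the two parities, and adding them gives the third.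
-/

open scoped symmDiff

open Function in
theorem _root_.Set.even_ncard_of_involutive {α : Type*} {S : Set α} {g : α → α}
    (hS : Set.MapsTo g S S) (hg : Involutive g) (hfix : ∀ a ∈ S, g a ≠ a) : Even S.ncard := by
  classical
  rcases S.finite_or_infinite with hfin | hinf
  · have := hfin.fintype
    have hres : Involutive (hS.restrict g S S) := fun x => Subtype.ext (hg x)
    have hsupp : hres.toPerm.support = Finset.univ := Finset.eq_univ_of_forall fun x =>
      Equiv.Perm.mem_support.mpr fun h => hfix x x.2 (congrArg Subtype.val h)
    have h2 := Equiv.Perm.two_dvd_card_support (σ := hres.toPerm) (Equiv.ext fun x => hres x)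
    rw [hsupp, Finset.card_univ, ← Nat.card_eq_fintype_card, Nat.card_coe_set_eq] at h2
    exact even_iff_two_dvd.mpr h2
  · simp [hinf.ncard]

lemma _root_.Set.insert_diff_pair_cancel {α : Type*} {s : Set α} {a b : α} (ha : a ∈ s)
    (hb : b ∉ s) : insert a (s \ {a, b}) = s := by
  ext z
  by_cases hza : z = a <;> by_cases hzb : z = b <;> simp_all

lemma _root_.Set.symmDiff_pair_eq_insert_diff {α : Type*} {s : Set α} {a b : α} (ha : a ∈ s)
    (hb : b ∉ s) : s ∆ {a, b} = insert b (s \ {a, b}) := by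
  ext z
  by_cases hza : z = a <;> by_cases hzb : z = b <;> simp_all [Set.mem_symmDiff]

section PendantEdge

variable {W : Type*} {F : Set (Sym2 W)} {u y : W}

lemma eq_of_reachable_fromEdgeSet_of_forall_notMem (hF : ∀ e ∈ F, u ∉ e) {z : W}
    (h : (fromEdgeSet F).Reachable u z) : z = u := by
  rw [reachable_iff_reflTransGen] at h
  rcases h.cases_head with h | ⟨c, hc, -⟩
  · exact h.symm
  · exact absurd (Sym2.mem_mk_left u c) (hF _ ((fromEdgeSet_adj F).mp hc).1)

lemma exists_mem_of_reachable_fromEdgeSet {z : W} (h : (fromEdgeSet F).Reachable u z)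
    (hz : z ≠ u) : ∃ e ∈ F, u ∈ e := by
  by_contra! hF
  exact hz (eq_of_reachable_fromEdgeSet_of_forall_notMem hF h)

lemma exists_ne_reachable_fromEdgeSet_insert (hy : y ≠ u) (a : W) :
    ∃ a' ≠ u, (fromEdgeSet (insert s(u, y) F)).Reachable a a' := by
  by_cases ha : a = u
  · exact ⟨y, hy, ha ▸ (by simp [hy.symm] : (fromEdgeSet (insert s(u, y) F)).Adj u y).reachable⟩
  · exact ⟨a, ha, .refl a⟩

lemma reachable_fromEdgeSet_insert_iff (hF : ∀ e ∈ F, u ∉ e) {a b : W} (ha : a ≠ u)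
    (hb : b ≠ u) :
    (fromEdgeSet (insert s(u, y) F)).Reachable a b ↔ (fromEdgeSet F).Reachable a b := by
  classical
  refine ⟨fun h => ?_, fun h => h.mono (fromEdgeSet_mono (Set.subset_insert _ _))⟩
  -- collapsing `u` onto `y` turns every edge of the larger graph into an `F`-walk
  let f : W → W := fun z => if z = u then y else z
  have hstep : (fromEdgeSet (insert s(u, y) F)).Adj ≤
      Function.onFun (Relation.ReflTransGen (fromEdgeSet F).Adj) f := by
    intro z z' hzz'
    obtain ⟨he | he, hne⟩ := (fromEdgeSet_adj _).mp hzz'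
    · obtain ⟨rfl, rfl⟩ | ⟨rfl, rfl⟩ := Sym2.eq_iff.mp he
      · simp [Function.onFun, f, Relation.ReflTransGen.refl]
      · simp [Function.onFun, f, Relation.ReflTransGen.refl]
    · have hz : z ≠ u := fun h => hF _ he (h ▸ Sym2.mem_mk_left _ _)
      have hz' : z' ≠ u := fun h => hF _ he (h ▸ Sym2.mem_mk_right _ _)
      simpa [Function.onFun, f, hz, hz'] using
        Relation.ReflTransGen.single ((fromEdgeSet_adj F).mpr ⟨he, hne⟩)
  have := Relation.ReflTransGen.lift' f hstep _ _ ((reachable_iff_reflTransGen _ _).mp h)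
  simpa [Function.onFun, f, ha, hb, ← reachable_iff_reflTransGen] using this

lemma connected_fromEdgeSet_insert_iff (hF : ∀ e ∈ F, u ∉ e) (hy : y ≠ u) :
    (fromEdgeSet (insert s(u, y) F)).Connected ↔
      ∀ a b, a ≠ u → b ≠ u → (fromEdgeSet F).Reachable a b := by
  refine ⟨fun h a b ha hb => (reachable_fromEdgeSet_insert_iff hF ha hb).mp (h.preconnected a b),
    fun h => (connected_iff _).mpr ⟨fun a b => ?_, ⟨u⟩⟩⟩
  obtain ⟨a', ha', haa'⟩ := exists_ne_reachable_fromEdgeSet_insert hy a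
  obtain ⟨b', hb', hbb'⟩ := exists_ne_reachable_fromEdgeSet_insert hy b
  exact haa'.trans (((reachable_fromEdgeSet_insert_iff hF ha' hb').mpr (h a' b' ha' hb')).trans
    hbb'.symm)

lemma isAcyclic_fromEdgeSet_insert_iff (hF : ∀ e ∈ F, u ∉ e) (hy : y ≠ u) :
    (fromEdgeSet (insert s(u, y) F)).IsAcyclic ↔ (fromEdgeSet F).IsAcyclic := by
  rw [Set.insert_eq, fromEdgeSet_union, sup_comm]
  exact isAcyclic_add_edge_iff_of_not_reachable u y
    fun h => hy (eq_of_reachable_fromEdgeSet_of_forall_notMem hF h)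

end PendantEdge

section AdmissiblePairs

variable {W : Type*} {H : SimpleGraph W} {F ψ φ : Set (Sym2 W)} {P₁ P₂ : Set W}
  {u y x₁ x₂ p r : W}

lemma isSpanningTree_insert_iff (hF : ∀ e ∈ F, u ∉ e) (hy : y ≠ u) :
    IsSpanningTree H (insert s(u, y) F) ↔ s(u, y) ∈ H.edgeSet ∧ F ⊆ H.edgeSet ∧
      (fromEdgeSet F).IsAcyclic ∧ ∀ a b, a ≠ u → b ≠ u → (fromEdgeSet F).Reachable a b := by
  rw [IsSpanningTree, Set.insert_subset_iff, connected_fromEdgeSet_insert_iff hF hy,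
    isAcyclic_fromEdgeSet_insert_iff hF hy]
  tauto

lemma isSpanning2Forest_iff_of_mem (hp : p ∈ P₁) (hr : r ∈ P₂) :
    IsSpanning2Forest H P₁ P₂ φ ↔ φ ⊆ H.edgeSet ∧ (fromEdgeSet φ).IsAcyclic ∧
      ¬ (fromEdgeSet φ).Reachable p r ∧
      (∀ z, (fromEdgeSet φ).Reachable z p ∨ (fromEdgeSet φ).Reachable z r) ∧
      (∀ z ∈ P₁, (fromEdgeSet φ).Reachable z p) ∧ (∀ z ∈ P₂, (fromEdgeSet φ).Reachable z r) := by
  simp only [IsSpanning2Forest, ← ConnectedComponent.eq]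
  refine and_congr_right fun _ => and_congr_right fun _ => ⟨?_, ?_⟩
  · rintro ⟨C₁, C₂, hne, hall, h₁, h₂⟩
    obtain rfl := h₁ p hp
    obtain rfl := h₂ r hr
    exact ⟨hne, fun z => hall _, h₁, h₂⟩
  · rintro ⟨hne, hall, h₁, h₂⟩
    refine ⟨_, _, hne, fun C => ?_, h₁, h₂⟩
    induction C using ConnectedComponent.ind with
    | h z => exact hall z

lemma IsSpanning2Forest.not_insert_right (h : IsSpanning2Forest H (insert u P₁) P₂ φ)
    (hp : p ∈ P₁) (hr : r ∈ P₂) : ¬ IsSpanning2Forest H P₁ (insert u P₂) φ := by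
  intro h'
  obtain ⟨-, -, hpr, -, hu, -⟩ :=
    (isSpanning2Forest_iff_of_mem (Set.mem_insert_of_mem u hp) hr).mp h
  obtain ⟨-, -, -, -, -, hu'⟩ :=
    (isSpanning2Forest_iff_of_mem hp (Set.mem_insert_of_mem u hr)).mp h'
  exact hpr ((hu u (Set.mem_insert u P₁)).symm.trans (hu' u (Set.mem_insert u P₂)))

lemma isSpanning2Forest_insert_or_iff (hF : ∀ e ∈ F, u ∉ e) (hy : y ≠ u) (hp : p ∈ P₁)
    (hr : r ∈ P₂) (hu₁ : u ∉ P₁) (hu₂ : u ∉ P₂) :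
    IsSpanning2Forest H (insert u P₁) P₂ (insert s(u, y) F) ∨
        IsSpanning2Forest H P₁ (insert u P₂) (insert s(u, y) F) ↔
      s(u, y) ∈ H.edgeSet ∧ F ⊆ H.edgeSet ∧ (fromEdgeSet F).IsAcyclic ∧
        ¬ (fromEdgeSet F).Reachable p r ∧
        (∀ z ≠ u, (fromEdgeSet F).Reachable z p ∨ (fromEdgeSet F).Reachable z r) ∧
        (∀ z ∈ P₁, (fromEdgeSet F).Reachable z p) ∧ (∀ z ∈ P₂, (fromEdgeSet F).Reachable z r) := by
  set K := fromEdgeSet (insert s(u, y) F)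
  have hpu : p ≠ u := ne_of_mem_of_not_mem hp hu₁
  have hru : r ≠ u := ne_of_mem_of_not_mem hr hu₂
  have hK {a b : W} (ha : a ≠ u) (hb : b ≠ u) :=
    reachable_fromEdgeSet_insert_iff (y := y) hF ha hb
  have hall : (∀ z, K.Reachable z p ∨ K.Reachable z r) ↔
      ∀ z ≠ u, (fromEdgeSet F).Reachable z p ∨ (fromEdgeSet F).Reachable z r := by
    refine ⟨fun h z hz => (h z).imp (hK hz hpu).mp (hK hz hru).mp, fun h z => ?_⟩
    obtain ⟨z', hz', hzz'⟩ := exists_ne_reachable_fromEdgeSet_insert (F := F) hy z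
    exact (h z' hz').imp (fun h' => hzz'.trans ((hK hz' hpu).mpr h'))
      (fun h' => hzz'.trans ((hK hz' hru).mpr h'))
  have hP₁ : (∀ z ∈ P₁, K.Reachable z p) ↔ ∀ z ∈ P₁, (fromEdgeSet F).Reachable z p :=
    forall₂_congr fun z hz => hK (ne_of_mem_of_not_mem hz hu₁) hpu
  have hP₂ : (∀ z ∈ P₂, K.Reachable z r) ↔ ∀ z ∈ P₂, (fromEdgeSet F).Reachable z r :=
    forall₂_congr fun z hz => hK (ne_of_mem_of_not_mem hz hu₂) hru
  rw [isSpanning2Forest_iff_of_mem (Set.mem_insert_of_mem u hp) hr,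
    isSpanning2Forest_iff_of_mem hp (Set.mem_insert_of_mem u hr), Set.insert_subset_iff,
    isAcyclic_fromEdgeSet_insert_iff hF hy, ← hall, ← hP₁, ← hP₂, ← hK hpu hru]
  simp only [Set.forall_mem_insert]
  have hu := fun h : ∀ z, K.Reachable z p ∨ K.Reachable z r => h u
  tauto

lemma admissiblePair_insert_or_swap {y₁ y₂ : W} (hψ : ∀ e ∈ ψ, u ∉ e)
    (hφ : ∀ e ∈ φ, u ∉ e) (hy₁ : y₁ ≠ u) (hy₂ : y₂ ≠ u) (hp : p ∈ P₁) (hr : r ∈ P₂)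
    (hu₁ : u ∉ P₁) (hu₂ : u ∉ P₂)
    (h : AdmissiblePair H (insert u P₁) P₂ (insert s(u, y₁) ψ) (insert s(u, y₂) φ) ∨
      AdmissiblePair H P₁ (insert u P₂) (insert s(u, y₁) ψ) (insert s(u, y₂) φ)) :
    AdmissiblePair H (insert u P₁) P₂ (insert s(u, y₂) ψ) (insert s(u, y₁) φ) ∨
      AdmissiblePair H P₁ (insert u P₂) (insert s(u, y₂) ψ) (insert s(u, y₁) φ) := by
  simp only [AdmissiblePair, ← and_or_left] at h ⊢
  obtain ⟨hdisj, hunion, htree, hforest⟩ := h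
  rw [isSpanningTree_insert_iff hψ hy₁] at htree
  rw [isSpanning2Forest_insert_or_iff hφ hy₂ hp hr hu₁ hu₂] at hforest
  have hψ₁ : s(u, y₁) ∉ ψ := fun h => hψ _ h (Sym2.mem_mk_left _ _)
  have hφ₂ : s(u, y₂) ∉ φ := fun h => hφ _ h (Sym2.mem_mk_left _ _)
  simp only [Set.disjoint_insert_left, Set.disjoint_insert_right, Set.mem_insert_iff,
    not_or] at hdisj ⊢
  refine ⟨⟨⟨Ne.symm hdisj.1.1, hψ₁⟩, hφ₂, hdisj.2.2⟩, ?_,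
    (isSpanningTree_insert_iff hψ hy₂).mpr ⟨hforest.1, htree.2⟩,
    (isSpanning2Forest_insert_or_iff hφ hy₁ hp hr hu₁ hu₂).mpr ⟨htree.1, hforest.2⟩⟩
  rw [← hunion, Set.insert_union, Set.union_insert, Set.insert_union, Set.union_insert,
    Set.insert_comm]

lemma eq_or_eq_of_mem_edgeSet (hN : H.neighborSet u = {x₁, x₂}) {e : Sym2 W}
    (he : e ∈ H.edgeSet) (hu : u ∈ e) : e = s(u, x₁) ∨ e = s(u, x₂) := by
  obtain ⟨z, rfl⟩ := Sym2.mem_iff_exists.mp hu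
  have hz : z ∈ H.neighborSet u := he
  rw [hN] at hz
  rcases hz with rfl | rfl
  · exact .inl rfl
  · exact .inr rfl

lemma AdmissiblePair.mem_and_mem_or (h : AdmissiblePair H P₁ P₂ ψ φ)
    (hN : H.neighborSet u = {x₁, x₂}) (hp : p ∈ P₁) (hr : r ∈ P₂) (hpu : p ≠ u) (hru : r ≠ u) :
    (s(u, x₁) ∈ ψ ∧ s(u, x₂) ∈ φ) ∨ (s(u, x₂) ∈ ψ ∧ s(u, x₁) ∈ φ) := by
  obtain ⟨hdisj, -, ⟨hψH, hconn, -⟩, hforest⟩ := h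
  obtain ⟨hφH, -, -, hall, -⟩ := (isSpanning2Forest_iff_of_mem hp hr).mp hforest
  obtain ⟨e, he, hue⟩ := exists_mem_of_reachable_fromEdgeSet (hconn.preconnected u p) hpu
  obtain ⟨e', he', hue'⟩ : ∃ e' ∈ φ, u ∈ e' := by
    rcases hall u with h | h
    · exact exists_mem_of_reachable_fromEdgeSet h hpu
    · exact exists_mem_of_reachable_fromEdgeSet h hru
  have hee' : e ≠ e' := fun h => Set.disjoint_left.mp hdisj he (h ▸ he')
  rcases eq_or_eq_of_mem_edgeSet hN (hψH he) hue with rfl | rfl <;>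
    rcases eq_or_eq_of_mem_edgeSet hN (hφH he') hue' with rfl | rfl
  · exact absurd rfl hee'
  · exact .inl ⟨he, he'⟩
  · exact .inr ⟨he, he'⟩
  · exact absurd rfl hee'

lemma admissiblePair_insert_or_symmDiff (hN : H.neighborSet u = {x₁, x₂}) (hp : p ∈ P₁)
    (hr : r ∈ P₂) (hu₁ : u ∉ P₁) (hu₂ : u ∉ P₂)
    (h : AdmissiblePair H (insert u P₁) P₂ ψ φ ∨ AdmissiblePair H P₁ (insert u P₂) ψ φ)
    (h₁ : s(u, x₁) ∈ ψ) (h₂ : s(u, x₂) ∈ φ) :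
    AdmissiblePair H (insert u P₁) P₂ (ψ ∆ {s(u, x₁), s(u, x₂)}) (φ ∆ {s(u, x₁), s(u, x₂)}) ∨
      AdmissiblePair H P₁ (insert u P₂) (ψ ∆ {s(u, x₁), s(u, x₂)})
        (φ ∆ {s(u, x₁), s(u, x₂)}) := by
  obtain ⟨hdisj, hunion⟩ : Disjoint ψ φ ∧ ψ ∪ φ = H.edgeSet :=
    h.elim (fun h => ⟨h.1, h.2.1⟩) (fun h => ⟨h.1, h.2.1⟩)
  have hx₁ : x₁ ≠ u := (show H.Adj u x₁ by simp [← mem_neighborSet, hN]).ne.symm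
  have hx₂ : x₂ ≠ u := (show H.Adj u x₂ by simp [← mem_neighborSet, hN]).ne.symm
  have h₁' : s(u, x₁) ∉ φ := Set.disjoint_left.mp hdisj h₁
  have h₂' : s(u, x₂) ∉ ψ := Set.disjoint_right.mp hdisj h₂
  have hisol {F : Set (Sym2 W)} (hF : F ⊆ H.edgeSet) : ∀ e ∈ F \ {s(u, x₁), s(u, x₂)}, u ∉ e :=
    fun e he hue => he.2 (eq_or_eq_of_mem_edgeSet hN (hF he.1) hue)
  have hψ := Set.insert_diff_pair_cancel h₁ h₂'
  have hφ := Set.insert_diff_pair_cancel h₂ h₁'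
  rw [Set.pair_comm s(u, x₂)] at hφ
  rw [Set.symmDiff_pair_eq_insert_diff h₁ h₂', Set.pair_comm s(u, x₁),
    Set.symmDiff_pair_eq_insert_diff h₂ h₁', Set.pair_comm s(u, x₂)]
  rw [← hψ, ← hφ] at h
  exact admissiblePair_insert_or_swap (hisol (hunion ▸ Set.subset_union_left))
    (hisol (hunion ▸ Set.subset_union_right)) hx₁ hx₂ hp hr hu₁ hu₂ h

lemma admissibleCount_comm (H : SimpleGraph W) (P₁ P₂ : Set W) :
    admissibleCount H P₁ P₂ = admissibleCount H P₂ P₁ := by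
  have hswap (Q₁ Q₂ : Set W) (φ : Set (Sym2 W)) :
      IsSpanning2Forest H Q₁ Q₂ φ → IsSpanning2Forest H Q₂ Q₁ φ := by
    rintro ⟨hsub, hac, C₁, C₂, hne, hall, h₁, h₂⟩
    exact ⟨hsub, hac, C₂, C₁, hne.symm, fun C => (hall C).symm, h₂, h₁⟩
  simp only [admissibleCount, AdmissiblePair]
  congr! 6
  exact ⟨hswap _ _ _, hswap _ _ _⟩

lemma admissibleCount_insert_add_eq_ncard [Finite W] (hp : p ∈ P₁) (hr : r ∈ P₂) :
    admissibleCount H (insert u P₁) P₂ + admissibleCount H P₁ (insert u P₂) =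
      {pr : Set (Sym2 W) × Set (Sym2 W) | AdmissiblePair H (insert u P₁) P₂ pr.1 pr.2 ∨
        AdmissiblePair H P₁ (insert u P₂) pr.1 pr.2}.ncard := by
  rw [Set.ofPred_or, Set.ncard_union_eq _ (Set.toFinite _) (Set.toFinite _)]
  · rfl
  exact Set.disjoint_left.mpr fun pr h h' => h.2.2.2.not_insert_right hp hr h'.2.2.2

theorem even_admissibleCount_insert_add [Finite W] (hu : (H.neighborSet u).ncard = 2)
    (hp : p ∈ P₁) (hr : r ∈ P₂) (hu₁ : u ∉ P₁) (hu₂ : u ∉ P₂) :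
    Even (admissibleCount H (insert u P₁) P₂ + admissibleCount H P₁ (insert u P₂)) := by
  obtain ⟨x₁, x₂, -, hN⟩ := Set.ncard_eq_two.mp hu
  have hpu : p ≠ u := ne_of_mem_of_not_mem hp hu₁
  have hru : r ≠ u := ne_of_mem_of_not_mem hr hu₂
  have hinv : Function.Involutive (· ∆ ({s(u, x₁), s(u, x₂)} : Set (Sym2 W))) :=
    fun _ => symmDiff_symmDiff_cancel_right _ _
  rw [admissibleCount_insert_add_eq_ncard hp hr]
  refine Set.even_ncard_of_involutive ?_ (hinv.prodMap hinv) ?_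
  · rintro ⟨ψ, φ⟩ h
    have hadm := h.elim (fun h => h.mem_and_mem_or hN (Set.mem_insert_of_mem u hp) hr hpu hru)
      (fun h => h.mem_and_mem_or hN hp (Set.mem_insert_of_mem u hr) hpu hru)
    rcases hadm with ⟨h₁, h₂⟩ | ⟨h₂, h₁⟩
    · exact admissiblePair_insert_or_symmDiff hN hp hr hu₁ hu₂ h h₁ h₂
    · have := admissiblePair_insert_or_symmDiff (x₁ := x₂) (x₂ := x₁)
        (hN.trans (Set.pair_comm _ _)) hp hr hu₁ hu₂ h h₂ h₁
      rwa [Set.pair_comm s(u, x₂)] at this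
  · rintro ⟨ψ, φ⟩ - h
    exact (Set.insert_nonempty _ _).ne_empty (symmDiff_eq_left.mp (congrArg Prod.fst h))

end AdmissiblePairs

lemma ncard_neighborSet_induce_compl_pair {V : Type*} [Finite V] {G : SimpleGraph V}
    {v w z : V} (hzv : G.Adj z v) (hzw : G.Adj z w) (hvw : v ≠ w) (hz : z ∈ ({v, w}ᶜ : Set V)) :
    ((G.induce {v, w}ᶜ).neighborSet ⟨z, hz⟩).ncard = (G.neighborSet z).ncard - 2 := by
  have hN : (G.induce {v, w}ᶜ).neighborSet ⟨z, hz⟩ =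
      Subtype.val ⁻¹' (G.neighborSet z \ {v, w}) := by
    ext ⟨x, hx⟩
    simp
  rw [hN, Set.ncard_preimage_of_injective_subset_range Subtype.val_injective
      (by rw [Subtype.range_coe, Set.sdiff_eq]; exact Set.inter_subset_right),
    Set.ncard_sdiff (Set.pair_subset (s := G.neighborSet z) hzv hzw), Set.ncard_pair hvw]

theorem tcase_parity_general {V : Type*} [Fintype V]
    (G : SimpleGraph V)
    (hreg : ∀ x : V, (G.neighborSet x).ncard = 4)
    (v w a b c d : V) (hvw : G.Adj v w)
    (hab : a ≠ b) (hac : a ≠ c) (hbc : b ≠ c) (hbd : b ≠ d) (hcd : c ≠ d)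
    (hav : a ≠ v) (haw : a ≠ w) (hbv : b ≠ v) (hbw : b ≠ w)
    (hcv : c ≠ v) (hcw : c ≠ w) (hdv : d ≠ v) (hdw : d ≠ w)
    (hNw : G.neighborSet w = {a, b, c, v}) (hNv : G.neighborSet v = {b, c, d, w}) :
    let T := G.induce ({v, w}ᶜ : Set V)
    let A : ↥({v, w}ᶜ : Set V) := ⟨a, mem_compl_pair hav haw⟩
    let B : ↥({v, w}ᶜ : Set V) := ⟨b, mem_compl_pair hbv hbw⟩
    let C : ↥({v, w}ᶜ : Set V) := ⟨c, mem_compl_pair hcv hcw⟩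
    let D : ↥({v, w}ᶜ : Set V) := ⟨d, mem_compl_pair hdv hdw⟩
    Even (admissibleCount T {A} {B, C, D} + admissibleCount T {A, B} {C, D}) ∧
    Even (admissibleCount T {D} {A, B, C} + admissibleCount T {A, B} {C, D}) ∧
    Even (admissibleCount T {A} {B, C, D} + admissibleCount T {D} {A, B, C}) := by
  intro T A B C D
  have hadj {x y : V} {s : Set V} (hN : G.neighborSet y = s) (hx : x ∈ s) : G.Adj x y :=
    (hN ▸ hx : x ∈ G.neighborSet y).symm
  have hB : (T.neighborSet B).ncard = 2 := by
    rw [ncard_neighborSet_induce_compl_pair (hadj hNv (by simp)) (hadj hNw (by simp)) hvw.ne,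
      hreg]
  have hC : (T.neighborSet C).ncard = 2 := by
    rw [ncard_neighborSet_induce_compl_pair (hadj hNv (by simp)) (hadj hNw (by simp)) hvw.ne,
      hreg]
  have hABCD := even_admissibleCount_insert_add hB (P₁ := {A}) (P₂ := {C, D})
    rfl (.inl rfl) (by simp [A, B, hab.symm]) (by simp [B, C, D, hbc, hbd])
  have hDABC := even_admissibleCount_insert_add hC (P₁ := {A, B}) (P₂ := {D})
    (.inl rfl) rfl (by simp [A, B, C, hac.symm, hbc.symm]) (by simp [C, D, hcd])
  rw [Set.pair_comm B A, add_comm] at hABCD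
  rw [admissibleCount_comm, Set.insert_comm C A, Set.pair_comm C B] at hDABC
  exact ⟨hABCD, hDABC,
    Nat.even_add.mpr ((Nat.even_add.mp hABCD).trans (Nat.even_add.mp hDABC).symm)⟩

/-- T-case involutions: in the T-case setup,
`t_{({a},{b,c,d})} + t_{({a,b},{c,d})}` is even, `t_{({d},{a,b,c})} + t_{({a,b},{c,d})}`
is even, and consequently `t_{({a},{b,c,d})} + t_{({d},{a,b,c})} ≡ 0 (mod 2)`. -/
theorem tcase_parity {V : Type*} [Fintype V]
    (G : SimpleGraph V) (hconn : G.Connected)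
    (hreg : ∀ x : V, (G.neighborSet x).ncard = 4)
    (v w a b c d : V) (hvw : G.Adj v w)
    (hab : a ≠ b) (hac : a ≠ c) (had : a ≠ d) (hbc : b ≠ c) (hbd : b ≠ d) (hcd : c ≠ d)
    (hav : a ≠ v) (haw : a ≠ w) (hbv : b ≠ v) (hbw : b ≠ w)
    (hcv : c ≠ v) (hcw : c ≠ w) (hdv : d ≠ v) (hdw : d ≠ w)
    (hNw : G.neighborSet w = {a, b, c, v}) (hNv : G.neighborSet v = {b, c, d, w}) :
    let T := G.induce ({v, w}ᶜ : Set V)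
    let A : ↥({v, w}ᶜ : Set V) := ⟨a, mem_compl_pair hav haw⟩
    let B : ↥({v, w}ᶜ : Set V) := ⟨b, mem_compl_pair hbv hbw⟩
    let C : ↥({v, w}ᶜ : Set V) := ⟨c, mem_compl_pair hcv hcw⟩
    let D : ↥({v, w}ᶜ : Set V) := ⟨d, mem_compl_pair hdv hdw⟩
    Even (admissibleCount T {A} {B, C, D} + admissibleCount T {A, B} {C, D}) ∧
    Even (admissibleCount T {D} {A, B, C} + admissibleCount T {A, B} {C, D}) ∧
    Even (admissibleCount T {A} {B, C, D} + admissibleCount T {D} {A, B, C}) :=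
  tcase_parity_general G hreg v w a b c d hvw hab hac hbc hbd hcd hav haw hbv hbw hcv hcw hdv hdw
    hNw hNv

end C2
end

section
/- Let n ≥ 1 and let π̂ be a permutation of {1,…,n}. Define the T-dual permutation π of {1,…,n} by π(i) = π̂(i+1) for 1 ≤ i ≤ n−1 and π(n) = π̂(1). Then π̂(1) does not belong to the set { i : π̂⁻¹(i) > i }, and { i : π⁻¹(i) > i } ∪ { i : π(i) = i } = { i : π̂⁻¹(i) > i } ∪ { π̂(1) }. Consequently, if the co-loopless decorated permutation π̂ (all fixed points declared loops) has exactly k anti-excedances, then the loopless decorated permutation π (all fixed points declared co-loops) has exactly k+1 anti-excedances, namely the anti-excedances of π̂ together with π̂(1). -/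
/-- T-duality on decorated permutations adds one anti-excedance:
let `πhat` be a permutation of `Fin n` (thought of as `{1,…,n}`) and let `π` be its
T-dual, `π i = πhat (i + 1)` cyclically (`finRotate n` is the cyclic shift `i ↦ i + 1`,
so in 1-indexed terms `π(i) = πhat(i+1)` for `i ≤ n−1` and `π(n) = πhat(1)`).
Then `πhat 0` (that is, `πhat(1)`) is not an anti-excedance of `πhat`; the
anti-excedances of the loopless decorated permutation `π` (those `i` with `π⁻¹ i > i`,
together with the fixed points of `π`, which are declared co-loops) are exactly the
anti-excedances `{ i : πhat⁻¹ i > i }` of the co-loopless `πhat` together with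
`πhat 0`; and consequently if `πhat` has exactly `k` anti-excedances then `π` has
exactly `k + 1`. -/
theorem tduality_antiexcedances (n : ℕ) (hn : 1 ≤ n)
    (πhat π : Equiv.Perm (Fin n)) (hπ : ∀ i : Fin n, π i = πhat (finRotate n i)) :
    πhat ⟨0, hn⟩ ∉ {i : Fin n | i < πhat.symm i} ∧
    ({i : Fin n | i < π.symm i} ∪ {i : Fin n | π i = i}) =
      {i : Fin n | i < πhat.symm i} ∪ {πhat ⟨0, hn⟩} ∧
    ∀ k : ℕ, {i : Fin n | i < πhat.symm i}.ncard = k →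
      ({i : Fin n | i < π.symm i} ∪ {i : Fin n | π i = i}).ncard = k + 1 := by
  obtain ⟨m, rfl⟩ : ∃ m, n = m + 1 := ⟨n - 1, by omega⟩
  have h0 : (⟨0, hn⟩ : Fin (m+1)) = 0 := rfl
  have hsymm : ∀ i, π.symm i = πhat.symm i - 1 := by
    intro i
    rw [Equiv.symm_apply_eq, hπ, finRotate_succ_apply, sub_add_cancel,
      Equiv.apply_symm_apply]
  have claim1 : πhat ⟨0, hn⟩ ∉ {i : Fin (m+1) | i < πhat.symm i} := by
    simp only [Set.mem_setOf_eq, Equiv.symm_apply_apply, h0]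
    exact Fin.not_lt_zero _
  have key : ∀ i : Fin (m+1),
      (i < π.symm i ∨ π i = i) ↔ (i < πhat.symm i ∨ i = πhat ⟨0, hn⟩) := by
    intro i
    have hfix : π i = i ↔ i + 1 = πhat.symm i := by
      rw [hπ, finRotate_succ_apply, Equiv.apply_eq_iff_eq_symm_apply]
    have hia : i = πhat ⟨0, hn⟩ ↔ πhat.symm i = 0 := by
      rw [h0, eq_comm, Equiv.symm_apply_eq, eq_comm]
    have hi := i.isLt
    have hsv := (πhat.symm i).isLt
    rw [hsymm, hfix, hia]
    by_cases hs : πhat.symm i = 0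
    · simp only [hs, iff_true, or_true]
      by_cases hl : i = Fin.last m
      · right
        rw [hl]
        exact Fin.last_add_one m
      · left
        rw [Fin.lt_def, Fin.coe_sub_one, if_pos rfl]
        have hl' : i.val ≠ m := fun h => hl (Fin.ext h)
        omega
    · have hs' : (πhat.symm i).val ≠ 0 := fun h => hs (Fin.ext h)
      simp only [hs, or_false]
      rw [Fin.lt_def, Fin.lt_def, Fin.coe_sub_one, if_neg hs]
      by_cases hl : i = Fin.last m
      · have h1 : i + 1 = 0 := by rw [hl]; exact Fin.last_add_one m
        have hne : i + 1 ≠ πhat.symm i := by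
          rw [h1]
          exact fun h => hs h.symm
        simp only [hne, or_false]
        have : i.val = m := by rw [hl]; rfl
        omega
      · have hl' : i.val ≠ m := fun h => hl (Fin.ext h)
        have heq : i + 1 = πhat.symm i ↔ i.val + 1 = (πhat.symm i).val := by
          rw [Fin.ext_iff, Fin.val_add_one, if_neg hl]
        rw [heq]
        omega
  have claim2 : ({i : Fin (m+1) | i < π.symm i} ∪ {i : Fin (m+1) | π i = i}) =
      {i : Fin (m+1) | i < πhat.symm i} ∪ {πhat ⟨0, hn⟩} := by
    ext i
    simp only [Set.mem_union, Set.mem_setOf_eq, Set.mem_singleton_iff]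
    exact key i
  refine ⟨claim1, claim2, ?_⟩
  intro k hk
  rw [claim2, Set.union_singleton, Set.ncard_insert_of_notMem claim1 (Set.toFinite _), hk]
end
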